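/- Fidelity decay of a Bell-diagonal state under amplitude damping memories: let γ ∈ [0,1] and let A_γ be the qubit amplitude damping channel with Kraus operators K₀ = |0⟩⟨0| + √(1−γ)|1⟩⟨1| and K₁ = √γ|0⟩⟨1|. Let α, β ∈ ℝ with α + β ≥ 0, α − β ≥ 0, and 1/2 − α ≥ 0, and let σ⁰ := (α+β)Φ⁺ + (α−β)Φ⁻ + (1/2 − α)Ψ⁺ + (1/2 − α)Ψ⁻ (a two-qubit density matrix). Then for every m ∈ ℕ, ⟨Φ⁺| (A_γ^{∘m} ⊗ A_γ^{∘m})(σ⁰) |Φ⁺⟩ = α·λ_m² + (β − 1/2)·λ_m + 1/2, where λ_m := (1−γ)^m and A_γ^{∘m} denotes the m-fold composition of A_γ. -/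

import Mathlib

open Matrix BigOperators
open scoped Kronecker

noncomputable section

/-- Kraus operators of the qubit amplitude damping channel `A_γ`:
`K₀ = |0⟩⟨0| + √(1-γ)|1⟩⟨1|`, `K₁ = √γ |0⟩⟨1|`. -/
def adKraus (γ : ℝ) : Fin 2 → Matrix (Fin 2) (Fin 2) ℂ := fun b =>
  if b = 0 then
    Matrix.of fun i j =>
      if i = 0 ∧ j = 0 then 1 else if i = 1 ∧ j = 1 then (Real.sqrt (1 - γ) : ℂ) else 0
  else
    Matrix.of fun i j => if i = 0 ∧ j = 1 then (Real.sqrt γ : ℂ) else 0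

/-- A Kraus operator `K_{i₁} ⋯ K_{i_m}` of the `m`-fold composition `A_γ^{∘m}`. -/
def adKrausWord (γ : ℝ) (m : ℕ) (i : Fin m → Fin 2) : Matrix (Fin 2) (Fin 2) ℂ :=
  (List.ofFn fun k => adKraus γ (i k)).prod

/-- The two-qubit channel `A_γ^{∘m} ⊗ A_γ^{∘m}`, written in terms of the Kraus
operators of the `m`-fold composition `A_γ^{∘m}`. -/
def adTensorIter (γ : ℝ) (m : ℕ) (σ : Matrix (Fin 2 × Fin 2) (Fin 2 × Fin 2) ℂ) :
    Matrix (Fin 2 × Fin 2) (Fin 2 × Fin 2) ℂ :=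
  ∑ i : Fin m → Fin 2, ∑ j : Fin m → Fin 2,
    (adKrausWord γ m i ⊗ₖ adKrausWord γ m j) * σ * (adKrausWord γ m i ⊗ₖ adKrausWord γ m j)ᴴ

/-- Bell state vector `|Φ⁺⟩`. -/
def phiPlus : Fin 2 × Fin 2 → ℂ :=
  fun k => if k = (0, 0) ∨ k = (1, 1) then ((Real.sqrt 2 : ℂ))⁻¹ else 0

/-- Bell state vector `|Φ⁻⟩`. -/
def phiMinus : Fin 2 × Fin 2 → ℂ :=
  fun k => if k = (0, 0) then ((Real.sqrt 2 : ℂ))⁻¹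
    else if k = (1, 1) then -((Real.sqrt 2 : ℂ))⁻¹ else 0

/-- Bell state vector `|Ψ⁺⟩`. -/
def psiPlus : Fin 2 × Fin 2 → ℂ :=
  fun k => if k = (0, 1) ∨ k = (1, 0) then ((Real.sqrt 2 : ℂ))⁻¹ else 0

/-- Bell state vector `|Ψ⁻⟩`. -/
def psiMinus : Fin 2 × Fin 2 → ℂ :=
  fun k => if k = (0, 1) then ((Real.sqrt 2 : ℂ))⁻¹
    else if k = (1, 0) then -((Real.sqrt 2 : ℂ))⁻¹ else 0

/-- Rank-one projector `|ψ⟩⟨ψ|`. -/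
def projv {m' : Type*} (ψ : m' → ℂ) : Matrix m' m' ℂ := Matrix.vecMulVec ψ (star ψ)

/-- Fidelity `⟨ψ|ρ|ψ⟩` of a state `ρ` with a pure state `|ψ⟩`. -/
def fidTo {m' : Type*} [Fintype m'] (ψ : m' → ℂ) (ρ : Matrix m' m' ℂ) : ℂ :=
  ∑ i, ∑ j, (starRingEnd ℂ) (ψ i) * ρ i j * ψ j

/-! The Bell-diagonal input is an X-state: a real matrix supported on the diagonal and on the
`|00⟩⟨11|` coherence. One step of `A_γ ⊗ A_γ` keeps this shape, moving population from `|11⟩`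
towards `|00⟩` at rate `γ` and multiplying the coherence by `1 - γ`, so the `m`-fold channel acts
on X-states by explicit polynomials in `λ_m = (1 - γ)^m`. The `Φ⁺`-fidelity of an X-state is the
mean of its `|00⟩` and `|11⟩` populations plus its coherence. -/

theorem Fintype.sum_fin_succ_pi {M α : Type*} [AddCommMonoid M] [Fintype α] (n : ℕ)
    (f : (Fin (n + 1) → α) → M) :
    ∑ i, f i = ∑ x, ∑ t : Fin n → α, f (Fin.cons x t) := by
  rw [← (Fin.consEquiv fun _ ↦ α).sum_comp, Fintype.sum_prod_type]
  rfl

def xState (a b c d e : ℝ) : Matrix (Fin 2 × Fin 2) (Fin 2 × Fin 2) ℂ :=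
  Matrix.of fun p q =>
    if p = q then
      if p = (0, 0) then (a : ℂ) else if p = (0, 1) then (b : ℂ)
      else if p = (1, 0) then (c : ℂ) else (d : ℂ)
    else if (p = (0, 0) ∧ q = (1, 1)) ∨ (p = (1, 1) ∧ q = (0, 0)) then (e : ℂ)
    else 0

def adTensor (γ : ℝ) (σ : Matrix (Fin 2 × Fin 2) (Fin 2 × Fin 2) ℂ) :
    Matrix (Fin 2 × Fin 2) (Fin 2 × Fin 2) ℂ :=
  ∑ x : Fin 2, ∑ y : Fin 2, (adKraus γ x ⊗ₖ adKraus γ y) * σ * (adKraus γ x ⊗ₖ adKraus γ y)ᴴ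

theorem adKrausWord_cons (γ : ℝ) (m : ℕ) (x : Fin 2) (t : Fin m → Fin 2) :
    adKrausWord γ (m + 1) (Fin.cons x t) = adKraus γ x * adKrausWord γ m t := by
  simp [adKrausWord, List.ofFn_succ]

theorem adTensorIter_succ (γ : ℝ) (m : ℕ) (σ : Matrix (Fin 2 × Fin 2) (Fin 2 × Fin 2) ℂ) :
    adTensorIter γ (m + 1) σ = adTensor γ (adTensorIter γ m σ) := by
  simp only [adTensorIter, adTensor, Fintype.sum_fin_succ_pi, adKrausWord_cons,
    mul_kronecker_mul, conjTranspose_mul, Finset.mul_sum, Finset.sum_mul, mul_assoc]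
  refine Finset.sum_congr rfl fun x _ ↦ ?_
  rw [Finset.sum_comm]

theorem adTensorIter_eq_iterate (γ : ℝ) (m : ℕ) : adTensorIter γ m = (adTensor γ)^[m] := by
  induction m with
  | zero => ext1 σ; simp [adTensorIter, adKrausWord]
  | succ m ih => ext1 σ; rw [adTensorIter_succ, ih, Function.iterate_succ_apply']

theorem adTensor_xState {γ : ℝ} (hγ0 : 0 ≤ γ) (hγ1 : γ ≤ 1) (a b c d e : ℝ) :
    adTensor γ (xState a b c d e) =
      xState (a + γ * b + γ * c + γ ^ 2 * d) ((1 - γ) * b + γ * (1 - γ) * d)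
        ((1 - γ) * c + γ * (1 - γ) * d) ((1 - γ) ^ 2 * d) ((1 - γ) * e) := by
  -- Kept polynomial in `√γ` and `√(1 - γ)` so that `ring` closes every entry.
  have entries : adTensor γ (xState a b c d e) =
      xState (a + √γ ^ 2 * b + √γ ^ 2 * c + (√γ ^ 2) ^ 2 * d)
        (√(1 - γ) ^ 2 * b + √γ ^ 2 * √(1 - γ) ^ 2 * d)
        (√(1 - γ) ^ 2 * c + √γ ^ 2 * √(1 - γ) ^ 2 * d) ((√(1 - γ) ^ 2) ^ 2 * d)
        (√(1 - γ) ^ 2 * e) := by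
    ext ⟨i, j⟩ ⟨k, l⟩
    simp only [adTensor, Fin.sum_univ_two, Matrix.add_apply, mul_apply, conjTranspose_apply,
      kroneckerMap_apply, Fintype.sum_prod_type, adKraus, xState, of_apply]
    fin_cases i <;> fin_cases j <;> fin_cases k <;> fin_cases l <;>
      simp [Prod.ext_iff, sq] <;> ring
  rwa [Real.sq_sqrt hγ0, Real.sq_sqrt (sub_nonneg.2 hγ1)] at entries

theorem adTensor_iterate_xState {γ : ℝ} (hγ0 : 0 ≤ γ) (hγ1 : γ ≤ 1) (a b c d e : ℝ) (m : ℕ) :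
    (adTensor γ)^[m] (xState a b c d e) =
      xState (a + (1 - (1 - γ) ^ m) * (b + c) + (1 - (1 - γ) ^ m) ^ 2 * d)
        ((1 - γ) ^ m * b + (1 - γ) ^ m * (1 - (1 - γ) ^ m) * d)
        ((1 - γ) ^ m * c + (1 - γ) ^ m * (1 - (1 - γ) ^ m) * d)
        (((1 - γ) ^ m) ^ 2 * d) ((1 - γ) ^ m * e) := by
  induction m with
  | zero => simp
  | succ m ih =>
    rw [Function.iterate_succ_apply', ih, adTensor_xState hγ0 hγ1]
    congr 1 <;> ring

theorem inv_sqrt_two_mul_self : ((√2 : ℝ) : ℂ)⁻¹ * ((√2 : ℝ) : ℂ)⁻¹ = 2⁻¹ := by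
  rw [← mul_inv, ← Complex.ofReal_mul, Real.mul_self_sqrt zero_le_two, Complex.ofReal_ofNat]

theorem bellDiagonal_eq_xState (p q r : ℝ) :
    (p : ℂ) • projv phiPlus + (q : ℂ) • projv phiMinus + (r : ℂ) • projv psiPlus
        + (r : ℂ) • projv psiMinus =
      xState ((p + q) / 2) r r ((p + q) / 2) ((p - q) / 2) := by
  ext ⟨i, j⟩ ⟨k, l⟩
  fin_cases i <;> fin_cases j <;> fin_cases k <;> fin_cases l <;>
    simp [xState, projv, phiPlus, phiMinus, psiPlus, psiMinus, vecMulVec_apply,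
      inv_sqrt_two_mul_self, Prod.ext_iff] <;> ring

theorem fidTo_phiPlus_xState (a b c d e : ℝ) :
    fidTo phiPlus (xState a b c d e) = (((a + d) / 2 + e : ℝ) : ℂ) := by
  simp [fidTo, Fintype.sum_prod_type, phiPlus, xState, Prod.ext_iff]
  linear_combination (a + 2 * e + d : ℂ) * inv_sqrt_two_mul_self

theorem bell_diagonal_fidelity_decay_general (γ : ℝ) (hγ0 : 0 ≤ γ) (hγ1 : γ ≤ 1)
    (α β : ℝ) (m : ℕ) :
    fidTo phiPlus (adTensorIter γ m
      (((α + β : ℝ) : ℂ) • projv phiPlus + ((α - β : ℝ) : ℂ) • projv phiMinus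
        + ((1 / 2 - α : ℝ) : ℂ) • projv psiPlus + ((1 / 2 - α : ℝ) : ℂ) • projv psiMinus))
      = ((α * ((1 - γ) ^ m) ^ 2 + (β - 1 / 2) * (1 - γ) ^ m + 1 / 2 : ℝ) : ℂ) := by
  rw [bellDiagonal_eq_xState, adTensorIter_eq_iterate, adTensor_iterate_xState hγ0 hγ1,
    fidTo_phiPlus_xState]
  congr 1
  ring

/-- **Fidelity decay of a Bell-diagonal state under amplitude damping memories.** -/
theorem bell_diagonal_fidelity_decay (γ : ℝ) (hγ0 : 0 ≤ γ) (hγ1 : γ ≤ 1)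
    (α β : ℝ) (h1 : 0 ≤ α + β) (h2 : 0 ≤ α - β) (h3 : 0 ≤ 1 / 2 - α) (m : ℕ) :
    fidTo phiPlus (adTensorIter γ m
      (((α + β : ℝ) : ℂ) • projv phiPlus + ((α - β : ℝ) : ℂ) • projv phiMinus
        + ((1 / 2 - α : ℝ) : ℂ) • projv psiPlus + ((1 / 2 - α : ℝ) : ℂ) • projv psiMinus))
      = ((α * ((1 - γ) ^ m) ^ 2 + (β - 1 / 2) * (1 - γ) ^ m + 1 / 2 : ℝ) : ℂ) :=
  bell_diagonal_fidelity_decay_general γ hγ0 hγ1 α β m
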